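/- arXiv:2307.09561 — 4 statements merged into one kernel-verified Lean document; each statement's English description precedes it below -/
import Mathlib

section
/- Let (A, X, I) be a polarity and R_□ ⊆ A × X an I-compatible relation. Then the operation [R_□] on the concept lattice preserves binary meets: [R_□](c₁ ∧ c₂) = [R_□]c₁ ∧ [R_□]c₂, and preserves the top concept: [R_□]⊤ = ⊤. -/
variable {A X : Type*}

/-- `I⁽¹⁾[B] = {x | ∀ a ∈ B, a I x}` -/
def polUp (I : A → X → Prop) (B : Set A) : Set X := {x | ∀ a ∈ B, I a x}

/-- `I⁽⁰⁾[Y] = {a | ∀ x ∈ Y, a I x}` -/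
def polDn (I : A → X → Prop) (Y : Set X) : Set A := {a | ∀ x ∈ Y, I a x}


/-- A formal concept of the polarity `(A, X, I)`. -/
structure FormalConcept (I : A → X → Prop) where
  ext : Set A
  int : Set X
  hext : ext = polDn I int
  hint : int = polUp I ext

instance (I : A → X → Prop) : PartialOrder (FormalConcept I) where
  le c d := c.ext ⊆ d.ext
  le_refl _ := subset_rfl
  le_trans _ _ _ h1 h2 := Set.Subset.trans h1 h2
  le_antisymm := by
    rintro ⟨e1, i1, he1, hi1⟩ ⟨e2, i2, he2, hi2⟩ h1 h2
    have he : e1 = e2 := le_antisymm h1 h2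
    subst he
    have : i1 = i2 := hi1.trans hi2.symm
    subst this
    rfl

theorem box_preserves_meets_and_top (I R : A → X → Prop)
    (hc0 : ∀ x : X, {a | R a x} = polDn I (polUp I {a | R a x}))
    (hc1 : ∀ a : A, {x | R a x} = polUp I (polDn I {x | R a x}))
    (c₁ c₂ : FormalConcept I) :
    {a | ∀ x ∈ polUp I (c₁.ext ∩ c₂.ext), R a x} =
      {a | ∀ x ∈ c₁.int, R a x} ∩ {a | ∀ x ∈ c₂.int, R a x} ∧
    {a | ∀ x ∈ polUp I (Set.univ : Set A), R a x} = (Set.univ : Set A) := by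
  constructor
  · ext a
    simp only [Set.mem_setOf_eq, Set.mem_inter_iff]
    constructor
    · intro h
      constructor
      · intro x hx
        apply h
        rw [FormalConcept.hint] at hx
        exact fun b hb => hx b hb.1
      · intro x hx
        apply h
        rw [FormalConcept.hint] at hx
        exact fun b hb => hx b hb.2
    · rintro ⟨h1, h2⟩ x hx
      -- S := {x | R a x} is stable
      have hsub : c₁.int ∪ c₂.int ⊆ {x | R a x} := by
        rintro y (hy | hy)
        exacts [h1 y hy, h2 y hy]
      have hdn : polDn I {x | R a x} ⊆ polDn I (c₁.int ∪ c₂.int) :=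
        fun b hb y hy => hb y (hsub hy)
      have hup : polUp I (polDn I (c₁.int ∪ c₂.int)) ⊆ polUp I (polDn I {x | R a x}) :=
        fun y hy b hb => hy b (hdn hb)
      have hext : c₁.ext ∩ c₂.ext = polDn I (c₁.int ∪ c₂.int) := by
        rw [c₁.hext, c₂.hext]
        ext b
        constructor
        · rintro ⟨hb1, hb2⟩ y (hy | hy)
          exacts [hb1 y hy, hb2 y hy]
        · intro hb
          exact ⟨fun y hy => hb y (Or.inl hy), fun y hy => hb y (Or.inr hy)⟩
      rw [hext] at hx
      have := hup hx
      rw [← hc1 a] at this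
      exact this
  · ext a
    simp only [Set.mem_setOf_eq, Set.mem_univ, iff_true]
    intro x hx
    have : x ∈ polUp I (polDn I {x | R a x}) :=
      fun b _ => hx b (Set.mem_univ b)
    rw [← hc1 a] at this
    exact this
end

section
/- Let (A, X, I) be a polarity and R_◇ ⊆ X × A an I-compatible relation. Then the operation ⟨R_◇⟩ on the concept lattice, defined by ⟨R_◇⟩c = (I⁽⁰⁾[R_◇⁽⁰⁾[B_c]], R_◇⁽⁰⁾[B_c]) where B_c is the extension of c, preserves binary joins: ⟨R_◇⟩(c₁ ∨ c₂) = ⟨R_◇⟩c₁ ∨ ⟨R_◇⟩c₂, and maps the bottom concept to the bottom concept. -/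
variable {A X : Type*}

theorem dia_preserves_joins_and_bot (I : A → X → Prop) (R : X → A → Prop)
    (hc0 : ∀ a : A, {x | R x a} = polUp I (polDn I {x | R x a}))
    (hc1 : ∀ x : X, {a | R x a} = polDn I (polUp I {a | R x a}))
    (c₁ c₂ : FormalConcept I) :
    {x | ∀ a ∈ polDn I (c₁.int ∩ c₂.int), R x a} =
      {x | ∀ a ∈ c₁.ext, R x a} ∩ {x | ∀ a ∈ c₂.ext, R x a} ∧
    {x | ∀ a ∈ polDn I (Set.univ : Set X), R x a} = (Set.univ : Set X) := by
  constructor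
  · ext x
    simp only [Set.mem_setOf_eq, Set.mem_inter_iff]
    constructor
    · intro h
      constructor
      · intro a ha
        apply h
        rw [c₁.hext] at ha
        intro x' hx'
        exact ha x' hx'.1
      · intro a ha
        apply h
        rw [c₂.hext] at ha
        intro x' hx'
        exact ha x' hx'.2
    · rintro ⟨h1, h2⟩ a ha
      have : a ∈ polDn I (polUp I {a' | R x a'}) := by
        intro x' hx'
        apply ha
        constructor
        · rw [c₁.hint]
          intro a' ha'
          exact hx' a' (h1 a' ha')
        · rw [c₂.hint]
          intro a' ha'
          exact hx' a' (h2 a' ha')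
      rw [← hc1 x] at this
      exact this
  · ext x
    simp only [Set.mem_univ, iff_true, Set.mem_setOf_eq]
    intro a ha
    have : a ∈ polDn I (polUp I {a' | R x a'}) := fun x' _ => ha x' trivial
    rw [← hc1 x] at this
    exact this
end

section
/- Let (A, X, I) be a polarity, R_□ ⊆ A × X and R_◇ ⊆ X × A I-compatible relations with x R_◇ a iff a R_□ x. Then the induced operations on the concept lattice form an adjoint pair: ⟨R_◇⟩c ≤ d if and only if c ≤ [R_□]d, for all formal concepts c, d. -/
variable {A X : Type*}

theorem dia_box_adjunction (I Rbox : A → X → Prop) (Rdia : X → A → Prop)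
    (hrel : ∀ (a : A) (x : X), Rdia x a ↔ Rbox a x)
    (hb0 : ∀ x : X, {a | Rbox a x} = polDn I (polUp I {a | Rbox a x}))
    (hb1 : ∀ a : A, {x | Rbox a x} = polUp I (polDn I {x | Rbox a x}))
    (hd0 : ∀ a : A, {x | Rdia x a} = polUp I (polDn I {x | Rdia x a}))
    (hd1 : ∀ x : X, {a | Rdia x a} = polDn I (polUp I {a | Rdia x a}))
    (c d : FormalConcept I) :
    polDn I {x | ∀ a ∈ c.ext, Rdia x a} ⊆ d.ext ↔
      c.ext ⊆ {a | ∀ x ∈ d.int, Rbox a x} := by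
  set Y : Set X := {x | ∀ a ∈ c.ext, Rdia x a} with hY
  have hup_anti : ∀ {B B' : Set A}, B ⊆ B' → polUp I B' ⊆ polUp I B :=
    fun h x hx a ha => hx a (h ha)
  have hdn_anti : ∀ {Z Z' : Set X}, Z ⊆ Z' → polDn I Z' ⊆ polDn I Z :=
    fun h a ha x hx => ha x (h hx)
  have hstable : polUp I (polDn I Y) ⊆ Y := by
    intro x hx a ha
    have hsub : Y ⊆ {x | Rdia x a} := fun x' hx' => hx' a ha
    have : polUp I (polDn I Y) ⊆ polUp I (polDn I {x | Rdia x a}) :=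
      hup_anti (hdn_anti hsub)
    have := this hx
    rwa [← hd0 a] at this
  constructor
  · intro h a ha x hx
    have hx' : x ∈ polUp I d.ext := by rw [← d.hint]; exact hx
    have : x ∈ Y := hstable (hup_anti h hx')
    exact (hrel a x).mp (this a ha)
  · intro h
    have hsub : d.int ⊆ Y := fun x hx a ha => (hrel a x).mpr (h ha x hx)
    intro a ha
    rw [d.hext]
    exact hdn_anti hsub ha
end

section
/- Let (A, X, I) be a polarity and suppose elements a_D ∈ A, x_D ∈ X satisfy: (i) a_D I x_D, and (ii) for all b ∈ A and y ∈ X, if a_D I y and b I x_D then b I y. Then I⁽¹⁾[I⁽⁰⁾[{x_D}]] = I⁽¹⁾[{a_D}] and I⁽⁰⁾[I⁽¹⁾[{a_D}]] = I⁽⁰⁾[{x_D}]; in particular (I⁽⁰⁾[{x_D}], I⁽¹⁾[{a_D}]) is a formal concept. -/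
variable {A X : Type*}

theorem classifying_object_and_feature (I : A → X → Prop) (aD : A) (xD : X)
    (h1 : I aD xD)
    (h2 : ∀ (b : A) (y : X), I aD y → I b xD → I b y) :
    polUp I (polDn I {xD}) = polUp I {aD} ∧
    polDn I (polUp I {aD}) = polDn I {xD} ∧
    ∃ c : FormalConcept I, c.ext = polDn I {xD} ∧ c.int = polUp I {aD} := by
  have e1 : polUp I (polDn I {xD}) = polUp I {aD} := by
    ext y
    constructor
    · intro hy
      intro a ha
      rw [Set.mem_singleton_iff] at ha; subst ha
      exact hy a (by intro x hx; rw [Set.mem_singleton_iff] at hx; subst hx; exact h1)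
    · intro hy b hb
      exact h2 b y (hy aD rfl) (hb xD rfl)
  have e2 : polDn I (polUp I {aD}) = polDn I {xD} := by
    ext b
    constructor
    · intro hb x hx
      rw [Set.mem_singleton_iff] at hx; subst hx
      exact hb x (by intro a ha; rw [Set.mem_singleton_iff] at ha; subst ha; exact h1)
    · intro hb y hy
      exact h2 b y (hy aD rfl) (hb xD rfl)
  exact ⟨e1, e2, ⟨polDn I {xD}, polUp I {aD}, e2.symm, e1.symm⟩, rfl, rfl⟩
end
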